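/- arXiv:2404.09084 — 4 statements merged into one kernel-verified Lean document; each statement's English description precedes it below -/
import Mathlib

section
/- Let n ≥ 1 and let W = (W₁,…,Wₙ) be the weighted left multi-shift on F²(Hₙ) associated with a weight sequence μ = {μ_β}_{|β|≥1} of nonnegative real numbers with sup_{α∈𝔽ₙ⁺} μ_{g_iα} < ∞ for each i. Then the sequence k ↦ sup_{α,β∈𝔽ₙ⁺, |β|=k} μ(β,α)^{1/k} converges as k → ∞ and its limit equals the joint spectral radius r(W). -/
open Filter ContinuousLinearMap
open scoped ComplexConjugate

noncomputable section

attribute [local instance] Classical.decEq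

abbrev Word (n : ℕ) := FreeMonoid (Fin n)

abbrev Fock (n : ℕ) := lp (fun _ : Word n => ℂ) 2

def fockE {n : ℕ} (α : Word n) : Fock n := lp.single 2 α 1

def wordOp {n : ℕ} {H : Type*} [NormedAddCommGroup H] [InnerProductSpace ℂ H]
    (T : Fin n → H →L[ℂ] H) (α : Word n) : H →L[ℂ] H :=
  ((FreeMonoid.toList α).map T).prod

def wordOfFn {n k : ℕ} (f : Fin k → Fin n) : Word n := FreeMonoid.ofList (List.ofFn f)

def rowSum {n : ℕ} {H : Type*} [NormedAddCommGroup H] [InnerProductSpace ℂ H]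
    [CompleteSpace H] (T : Fin n → H →L[ℂ] H) (k : ℕ) : H →L[ℂ] H :=
  ∑ f : Fin k → Fin n, wordOp T (wordOfFn f) * adjoint (wordOp T (wordOfFn f))

def jsr {n : ℕ} {H : Type*} [NormedAddCommGroup H] [InnerProductSpace ℂ H]
    [CompleteSpace H] (T : Fin n → H →L[ℂ] H) : ℝ :=
  limUnder atTop fun k : ℕ => ‖rowSum T k‖ ^ ((1 : ℝ) / (2 * k))

def muProd {n : ℕ} (μ : Word n → ℝ) (β α : Word n) : ℝ :=
  ((List.range (FreeMonoid.length β)).map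
    fun j => μ (FreeMonoid.ofList ((FreeMonoid.toList β).drop j) * α)).prod

def IsWeightedShift {n : ℕ} (μ : Word n → ℝ) (W : Fin n → Fock n →L[ℂ] Fock n) : Prop :=
  ∀ (i : Fin n) (α : Word n),
    W i (fockE α) = (μ (FreeMonoid.of i * α) : ℂ) • fockE (FreeMonoid.of i * α)

def BddWeights {n : ℕ} (μ : Word n → ℝ) : Prop :=
  ∀ i : Fin n, BddAbove (Set.range fun α : Word n => μ (FreeMonoid.of i * α))

def IsWeightedShiftTensor {n : ℕ} {H : Type*} [NormedAddCommGroup H] [InnerProductSpace ℂ H]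
    (μ : Word n → ℝ)
    (Wt : Fin n → lp (fun _ : Word n => H) 2 →L[ℂ] lp (fun _ : Word n => H) 2) : Prop :=
  ∀ (i : Fin n) (α : Word n) (h : H),
    Wt i (lp.single 2 α h) = (μ (FreeMonoid.of i * α) : ℂ) • lp.single 2 (FreeMonoid.of i * α) h

def polyOp {n : ℕ} {H : Type*} [NormedAddCommGroup H] [InnerProductSpace ℂ H]
    (T : Fin n → H →L[ℂ] H) (c : Word n →₀ ℂ) : H →L[ℂ] H :=
  c.sum fun α z => z • wordOp T α

/-!
Each `W_β` maps `e_α` to `μ(β,α) e_{βα}`, and a word of length at least `k` factors uniquely as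
`βα` with `|β| = k`. Hence `∑_{|β|=k} W_β W_β^*` is diagonal in the basis `(e_γ)`, with entry
`μ(β,α)²` at `γ = βα`, so its norm is `s_k²` where `s_k = sup_{|β|=k, α} μ(β,α)`. The cocycle
identity `μ(β₁β₂,α) = μ(β₁,β₂α) μ(β₂,α)` makes `s` submultiplicative, so `s_k^{1/k}` converges by
Fekete's lemma; its limit is both `r(W)` and the limit of `sup μ(β,α)^{1/k}`.
-/

open scoped Topology ENNReal

theorem exists_tendsto_rpow_one_div_of_submultiplicative {s : ℕ → ℝ} (hs : ∀ k, 0 ≤ s k)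
    (hsub : ∀ k l, s (k + l) ≤ s k * s l) :
    ∃ L, Tendsto (fun k : ℕ => s k ^ ((1 : ℝ) / k)) atTop (𝓝 L) := by
  by_cases hzero : ∃ m, s m = 0
  · obtain ⟨m, hm⟩ := hzero
    refine ⟨0, tendsto_const_nhds.congr' ?_⟩
    filter_upwards [eventually_ge_atTop (m + 1)] with k hk
    have hsk : s k = 0 := by
      refine le_antisymm ?_ (hs k)
      calc s k = s (k - m + m) := by rw [Nat.sub_add_cancel (by omega)]
        _ ≤ s (k - m) * s m := hsub _ _
        _ = 0 := by rw [hm, mul_zero]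
    have hk0 : (1 : ℝ) / k ≠ 0 := one_div_ne_zero (Nat.cast_ne_zero.2 (by omega))
    rw [hsk, Real.zero_rpow hk0]
  push Not at hzero
  have hpos : ∀ k, 0 < s k := fun k => (hs k).lt_of_ne' (hzero k)
  have hlog : Subadditive fun k => Real.log (s k) := fun k l => by
    rw [← Real.log_mul (hzero k) (hzero l)]
    exact Real.log_le_log (hpos _) (hsub k l)
  have hexp : ∀ k : ℕ, s k ^ ((1 : ℝ) / k) = Real.exp (Real.log (s k) / k) := fun k => by
    rw [Real.rpow_def_of_pos (hpos k), mul_one_div]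
  simp_rw [hexp]
  -- if `log (s k) / k` is not bounded below, it tends to `-∞`, and `s k ^ (1 / k)` to `0`
  by_cases hbdd : BddBelow (Set.range fun k : ℕ => Real.log (s k) / k)
  · exact ⟨_, (Real.continuous_exp.tendsto _).comp (hlog.tendsto_lim hbdd)⟩
  refine ⟨0, Real.tendsto_exp_atBot.comp (tendsto_atBot.2 fun L => ?_)⟩
  obtain ⟨_, ⟨m, rfl⟩, hm⟩ := not_bddBelow_iff.1 hbdd (min L 0)
  have hm0 : m ≠ 0 := by
    rintro rfl
    simp only [Nat.cast_zero, div_zero] at hm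
    exact (min_le_right L 0).not_gt hm
  exact (hlog.eventually_div_lt_of_div_lt hm0 hm).mono fun k hk =>
    (hk.trans_le (min_le_left _ _)).le

theorem iSup_rpow_of_nonneg {ι : Sort*} {g : ι → ℝ} (hg : ∀ i, 0 ≤ g i)
    (hbdd : BddAbove (Set.range g)) {r : ℝ} (hr : 0 < r) :
    (⨆ i, g i) ^ r = ⨆ i, g i ^ r := by
  have hS : 0 ≤ ⨆ i, g i := Real.iSup_nonneg hg
  have hbdd' : BddAbove (Set.range fun i => g i ^ r) := by
    refine ⟨(⨆ i, g i) ^ r, ?_⟩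
    rintro _ ⟨i, rfl⟩
    exact Real.rpow_le_rpow (hg i) (le_ciSup hbdd i) hr.le
  have hT : 0 ≤ ⨆ i, g i ^ r := Real.iSup_nonneg fun i => Real.rpow_nonneg (hg i) r
  refine le_antisymm ?_ (Real.iSup_le (fun i => ?_) (Real.rpow_nonneg hS r))
  · rw [← Real.le_rpow_inv_iff_of_pos hS hT hr]
    exact Real.iSup_le (fun i => (Real.le_rpow_inv_iff_of_pos (hg i) hT hr).2 (le_ciSup hbdd' i))
      (Real.rpow_nonneg hT _)
  · exact Real.rpow_le_rpow (hg i) (le_ciSup hbdd i) hr.le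

section Words

variable {n : ℕ}

theorem length_wordOfFn {k : ℕ} (f : Fin k → Fin n) : (wordOfFn f).length = k :=
  List.length_ofFn

theorem toList_wordOfFn_mul {k : ℕ} (f : Fin k → Fin n) (α : Word n) :
    (wordOfFn f * α).toList = List.ofFn f ++ α.toList :=
  rfl

theorem eq_of_wordOfFn_mul_eq {k : ℕ} {f g : Fin k → Fin n} {α β : Word n}
    (h : wordOfFn f * α = wordOfFn g * β) : f = g := by
  have h' := congrArg FreeMonoid.toList h
  rw [toList_wordOfFn_mul, toList_wordOfFn_mul] at h'
  exact List.ofFn_injective (List.append_inj h' (by simp)).1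

theorem exists_eq_wordOfFn_mul {k : ℕ} {γ : Word n} (hk : k ≤ γ.length) :
    ∃ (f : Fin k → Fin n) (α : Word n), γ = wordOfFn f * α := by
  refine ⟨fun j => γ.toList[j], FreeMonoid.ofList (γ.toList.drop k), ?_⟩
  apply FreeMonoid.toList.injective
  rw [toList_wordOfFn_mul, FreeMonoid.toList_ofList]
  conv_lhs => rw [← List.take_append_drop k γ.toList]
  have hk' : k ≤ γ.toList.length := hk
  congr 1
  apply List.ext_getElem <;> simp [hk']

end Words

section muProd

variable {n : ℕ} (μ : Word n → ℝ)

theorem muProd_one_left (α : Word n) : muProd μ 1 α = 1 := rfl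

theorem muProd_of_mul (i : Fin n) (β α : Word n) :
    muProd μ (FreeMonoid.of i * β) α = μ (FreeMonoid.of i * (β * α)) * muProd μ β α := by
  simp only [muProd, FreeMonoid.length_mul, FreeMonoid.length_of, FreeMonoid.toList_mul,
    FreeMonoid.toList_of]
  rw [add_comm 1, List.range_succ_eq_map]
  simp only [List.map_cons, List.map_map, List.prod_cons, List.drop_zero, List.singleton_append]
  congr 1

theorem muProd_mul (β₁ β₂ α : Word n) :
    muProd μ (β₁ * β₂) α = muProd μ β₁ (β₂ * α) * muProd μ β₂ α := by
  induction β₁ using FreeMonoid.inductionOn' with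
  | one => rw [one_mul, muProd_one_left, one_mul]
  | of_mul i β ih => rw [mul_assoc, muProd_of_mul, muProd_of_mul, ih, mul_assoc, mul_assoc]

variable {μ}

theorem one_le_length_of_mul (i : Fin n) (β : Word n) : 1 ≤ (FreeMonoid.of i * β).length := by
  rw [FreeMonoid.length_mul, FreeMonoid.length_of]
  omega

theorem muProd_nonneg (hμ : ∀ β : Word n, 1 ≤ β.length → 0 ≤ μ β) (β α : Word n) :
    0 ≤ muProd μ β α := by
  induction β using FreeMonoid.inductionOn' with
  | one => exact zero_le_one
  | of_mul i β ih =>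
    rw [muProd_of_mul]
    exact mul_nonneg (hμ _ (one_le_length_of_mul _ _)) ih

theorem muProd_le_pow_length (hμ : ∀ β : Word n, 1 ≤ β.length → 0 ≤ μ β) {M : ℝ}
    (hM : ∀ (i : Fin n) (α : Word n), μ (FreeMonoid.of i * α) ≤ M) (β α : Word n) :
    muProd μ β α ≤ M ^ β.length := by
  induction β using FreeMonoid.inductionOn' with
  | one => simp [muProd_one_left]
  | of_mul i β ih =>
    have hM0 : 0 ≤ M := (hμ _ (one_le_length_of_mul i 1)).trans (hM i 1)
    rw [muProd_of_mul, FreeMonoid.length_mul, FreeMonoid.length_of, add_comm, pow_succ']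
    exact mul_le_mul (hM _ _) ih (muProd_nonneg hμ β α) hM0

end muProd

section DiagonalOperator

variable {𝕜 ι : Type*} [RCLike 𝕜] {p : ℝ≥0∞} [Fact (1 ≤ p)]

def IsDiagonalWith (A : lp (fun _ : ι => 𝕜) p →L[𝕜] lp (fun _ : ι => 𝕜) p) (d : ι → 𝕜) : Prop :=
  ∀ i, A (lp.single (E := fun _ : ι => 𝕜) p i 1) = d i • lp.single (E := fun _ : ι => 𝕜) p i 1

variable {A : lp (fun _ : ι => 𝕜) p →L[𝕜] lp (fun _ : ι => 𝕜) p} {d : ι → 𝕜}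

theorem IsDiagonalWith.apply_apply (hA : IsDiagonalWith A d) (hp : p ≠ ⊤)
    (x : lp (fun _ : ι => 𝕜) p) (j : ι) : A x j = d j * x j := by
  have hsum := (lp.evalCLM 𝕜 (fun _ : ι => 𝕜) p j ∘L A).hasSum (lp.hasSum_single hp x)
  have hterm : ∀ i, (lp.evalCLM 𝕜 (fun _ : ι => 𝕜) p j ∘L A) (lp.single p i (x i))
      = if i = j then d j * x j else 0 := by
    intro i
    have hsingle : lp.single p i (x i) = x i • lp.single (E := fun _ : ι => 𝕜) p i 1 := by
      rw [← lp.single_smul, smul_eq_mul, mul_one]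
    rw [ContinuousLinearMap.comp_apply, hsingle, map_smul, hA i]
    split_ifs with h
    · subst h
      simp [lp.evalCLM, mul_comm]
    · simp [lp.evalCLM, Pi.single_eq_of_ne (Ne.symm h)]
  simp only [hterm] at hsum
  exact hsum.unique (hasSum_ite_eq j _)

theorem IsDiagonalWith.norm_le_opNorm (hA : IsDiagonalWith A d) (i : ι) : ‖d i‖ ≤ ‖A‖ := by
  have hp : 0 < p := zero_lt_one.trans_le Fact.out
  have h := A.le_opNorm (lp.single (E := fun _ : ι => 𝕜) p i 1)
  rwa [hA i, norm_smul, lp.norm_single hp, norm_one, mul_one, mul_one] at h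

theorem IsDiagonalWith.opNorm_le (hA : IsDiagonalWith A d) (hp : p ≠ ⊤) {B : ℝ} (hB0 : 0 ≤ B)
    (hB : ∀ i, ‖d i‖ ≤ B) : ‖A‖ ≤ B := by
  have hp0 : p ≠ 0 := (zero_lt_one.trans_le Fact.out).ne'
  refine A.opNorm_le_bound hB0 fun x => ?_
  calc ‖A x‖ ≤ ‖(B : 𝕜) • x‖ := lp.norm_mono hp0 fun j => by
        rw [hA.apply_apply hp, lp.coeFn_smul, Pi.smul_apply, norm_mul, norm_smul,
          RCLike.norm_ofReal, abs_of_nonneg hB0]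
        exact mul_le_mul_of_nonneg_right (hB j) (norm_nonneg _)
    _ = B * ‖x‖ := by rw [norm_smul, RCLike.norm_ofReal, abs_of_nonneg hB0]

end DiagonalOperator

section Fock

variable {n : ℕ}

theorem fockE_apply (γ δ : Word n) : fockE γ δ = if δ = γ then 1 else 0 := by
  simp [fockE, lp.single_apply, Pi.single_apply]

theorem inner_fockE_left (α : Word n) (x : Fock n) : inner ℂ (fockE α) x = x α := by
  simp [fockE, lp.inner_single_left]

theorem wordOp_one {H : Type*} [NormedAddCommGroup H] [InnerProductSpace ℂ H]
    (T : Fin n → H →L[ℂ] H) : wordOp T 1 = 1 :=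
  rfl

theorem wordOp_of_mul {H : Type*} [NormedAddCommGroup H] [InnerProductSpace ℂ H]
    (T : Fin n → H →L[ℂ] H) (i : Fin n) (β : Word n) :
    wordOp T (FreeMonoid.of i * β) = T i * wordOp T β :=
  rfl

variable {μ : Word n → ℝ} {W : Fin n → Fock n →L[ℂ] Fock n}

theorem IsWeightedShift.wordOp_fockE (hW : IsWeightedShift μ W) (β α : Word n) :
    wordOp W β (fockE α) = (muProd μ β α : ℂ) • fockE (β * α) := by
  induction β using FreeMonoid.inductionOn' with
  | one => simp [wordOp_one, muProd_one_left]
  | of_mul i β ih =>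
    rw [wordOp_of_mul, mul_apply_eq_comp, ih, map_smul, hW, smul_smul, muProd_of_mul,
      mul_assoc, Complex.ofReal_mul, mul_comm (μ _ : ℂ)]

theorem IsWeightedShift.adjoint_wordOp_fockE_apply (hW : IsWeightedShift μ W) (β γ α : Word n) :
    adjoint (wordOp W β) (fockE γ) α = if β * α = γ then (muProd μ β α : ℂ) else 0 := by
  rw [← inner_fockE_left, adjoint_inner_right, hW.wordOp_fockE, inner_smul_left,
    inner_fockE_left, fockE_apply]
  split_ifs <;> simp

theorem IsWeightedShift.adjoint_wordOp_fockE_mul (hW : IsWeightedShift μ W) (β α : Word n) :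
    adjoint (wordOp W β) (fockE (β * α)) = (muProd μ β α : ℂ) • fockE α := by
  ext δ
  rw [hW.adjoint_wordOp_fockE_apply, lp.coeFn_smul, Pi.smul_apply, fockE_apply, smul_eq_mul]
  by_cases h : δ = α <;> simp [h]

theorem IsWeightedShift.adjoint_wordOp_fockE_eq_zero (hW : IsWeightedShift μ W) {β γ : Word n}
    (h : ∀ α, β * α ≠ γ) : adjoint (wordOp W β) (fockE γ) = 0 := by
  ext α
  rw [hW.adjoint_wordOp_fockE_apply, if_neg (h α)]
  rfl

end Fock

section RowSum

variable {n : ℕ} {μ : Word n → ℝ} {W : Fin n → Fock n →L[ℂ] Fock n}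

variable (μ) in
def rowSumWeight (k : ℕ) (γ : Word n) : ℝ :=
  if k ≤ γ.length then
    muProd μ (FreeMonoid.ofList (γ.toList.take k)) (FreeMonoid.ofList (γ.toList.drop k)) ^ 2
  else 0

theorem rowSumWeight_nonneg (k : ℕ) (γ : Word n) : 0 ≤ rowSumWeight μ k γ := by
  unfold rowSumWeight
  split_ifs
  exacts [sq_nonneg _, le_rfl]

theorem rowSumWeight_wordOfFn_mul {k : ℕ} (f : Fin k → Fin n) (α : Word n) :
    rowSumWeight μ k (wordOfFn f * α) = muProd μ (wordOfFn f) α ^ 2 := by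
  have hf : (List.ofFn f).length = k := List.length_ofFn
  rw [rowSumWeight, if_pos (by simp [length_wordOfFn]), toList_wordOfFn_mul,
    List.take_left' hf, List.drop_left' hf, FreeMonoid.ofList_toList]
  rfl

theorem rowSumWeight_of_length_lt {k : ℕ} {γ : Word n} (h : γ.length < k) :
    rowSumWeight μ k γ = 0 :=
  if_neg h.not_ge

theorem IsWeightedShift.isDiagonalWith_rowSum (hW : IsWeightedShift μ W) (k : ℕ) :
    IsDiagonalWith (rowSum W k) fun γ => (rowSumWeight μ k γ : ℂ) := by
  intro γ
  change rowSum W k (fockE γ) = (rowSumWeight μ k γ : ℂ) • fockE γ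
  rw [rowSum, sum_apply]
  by_cases hk : k ≤ γ.length
  · obtain ⟨f, α, rfl⟩ := exists_eq_wordOfFn_mul hk
    rw [Finset.sum_eq_single f]
    · rw [mul_apply_eq_comp, hW.adjoint_wordOp_fockE_mul, map_smul,
        hW.wordOp_fockE, smul_smul, rowSumWeight_wordOfFn_mul]
      push_cast [sq]
      rfl
    · intro g _ hg
      rw [mul_apply_eq_comp,
        hW.adjoint_wordOp_fockE_eq_zero fun β h => hg (eq_of_wordOfFn_mul_eq h), map_zero]
    · exact fun h => (h (Finset.mem_univ f)).elim
  · rw [rowSumWeight_of_length_lt (not_le.1 hk), Complex.ofReal_zero, zero_smul]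
    refine Finset.sum_eq_zero fun g _ => ?_
    have hshort : ∀ β, wordOfFn g * β ≠ γ := fun β h => hk <| by
      rw [← h, FreeMonoid.length_mul, length_wordOfFn]
      omega
    rw [mul_apply_eq_comp, hW.adjoint_wordOp_fockE_eq_zero hshort, map_zero]

end RowSum

section SupMuProd

variable {n : ℕ} {μ : Word n → ℝ}

theorem BddWeights.exists_forall_le (h : BddWeights μ) :
    ∃ M, ∀ (i : Fin n) (α : Word n), μ (FreeMonoid.of i * α) ≤ M := by
  choose C hC using h
  refine ⟨∑ j, |C j|, fun i α => ?_⟩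
  calc μ (FreeMonoid.of i * α) ≤ C i := hC i ⟨α, rfl⟩
    _ ≤ |C i| := le_abs_self _
    _ ≤ ∑ j, |C j| := Finset.single_le_sum (fun j _ => abs_nonneg (C j)) (Finset.mem_univ i)

variable (μ) in
def supMuProd (k : ℕ) : ℝ :=
  ⨆ (f : Fin k → Fin n) (α : Word n), muProd μ (wordOfFn f) α

variable (hμ : ∀ β : Word n, 1 ≤ β.length → 0 ≤ μ β)
include hμ

theorem supMuProd_nonneg (k : ℕ) : 0 ≤ supMuProd μ k :=
  Real.iSup_nonneg fun _ => Real.iSup_nonneg fun α => muProd_nonneg hμ _ α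

variable (hbdd : BddWeights μ)
include hbdd

theorem bddAbove_range_muProd (β : Word n) : BddAbove (Set.range fun α => muProd μ β α) := by
  obtain ⟨M, hM⟩ := hbdd.exists_forall_le
  exact ⟨M ^ β.length, Set.forall_mem_range.2 (muProd_le_pow_length hμ hM β)⟩

theorem bddAbove_range_iSup_muProd (k : ℕ) :
    BddAbove (Set.range fun f : Fin k → Fin n => ⨆ α, muProd μ (wordOfFn f) α) := by
  obtain ⟨M, hM⟩ := hbdd.exists_forall_le
  refine ⟨M ^ k, Set.forall_mem_range.2 fun f => ciSup_le fun α => ?_⟩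
  simpa only [length_wordOfFn] using muProd_le_pow_length hμ hM (wordOfFn f) α

theorem muProd_le_supMuProd {k : ℕ} (f : Fin k → Fin n) (α : Word n) :
    muProd μ (wordOfFn f) α ≤ supMuProd μ k :=
  (le_ciSup (bddAbove_range_muProd hμ hbdd _) α).trans
    (le_ciSup (bddAbove_range_iSup_muProd hμ hbdd k) f)

theorem rowSumWeight_le_sq_supMuProd (k : ℕ) (γ : Word n) :
    rowSumWeight μ k γ ≤ supMuProd μ k ^ 2 := by
  by_cases hk : k ≤ γ.length
  · obtain ⟨f, α, rfl⟩ := exists_eq_wordOfFn_mul hk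
    rw [rowSumWeight_wordOfFn_mul]
    exact pow_le_pow_left₀ (muProd_nonneg hμ _ _) (muProd_le_supMuProd hμ hbdd f α) 2
  · rw [rowSumWeight_of_length_lt (not_le.1 hk)]
    exact sq_nonneg _

theorem supMuProd_add_le (k l : ℕ) : supMuProd μ (k + l) ≤ supMuProd μ k * supMuProd μ l := by
  refine Real.iSup_le (fun f => Real.iSup_le (fun α => ?_) ?_) ?_
  · have hsplit : wordOfFn f = wordOfFn (fun i => f (Fin.castAdd l i))
        * wordOfFn (fun j => f (Fin.natAdd k j)) := by
      rw [wordOfFn, wordOfFn, wordOfFn, ← FreeMonoid.ofList_append, List.ofFn_add]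
      rfl
    rw [hsplit, muProd_mul]
    exact mul_le_mul (muProd_le_supMuProd hμ hbdd _ _) (muProd_le_supMuProd hμ hbdd _ _)
      (muProd_nonneg hμ _ _) (supMuProd_nonneg hμ k)
  all_goals exact mul_nonneg (supMuProd_nonneg hμ k) (supMuProd_nonneg hμ l)

theorem IsWeightedShift.norm_rowSum {W : Fin n → Fock n →L[ℂ] Fock n} (hW : IsWeightedShift μ W)
    (k : ℕ) : ‖rowSum W k‖ = supMuProd μ k ^ 2 := by
  have hdiag := hW.isDiagonalWith_rowSum k
  have hweight : ∀ γ, ‖(rowSumWeight μ k γ : ℂ)‖ = rowSumWeight μ k γ := fun γ => by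
    rw [Complex.norm_real, Real.norm_eq_abs, abs_of_nonneg (rowSumWeight_nonneg k γ)]
  refine le_antisymm (hdiag.opNorm_le ENNReal.ofNat_ne_top (sq_nonneg _) fun γ => ?_) ?_
  · rw [hweight]
    exact rowSumWeight_le_sq_supMuProd hμ hbdd k γ
  · have hle : supMuProd μ k ≤ √‖rowSum W k‖ := by
      refine Real.iSup_le (fun f => Real.iSup_le (fun α => ?_) (Real.sqrt_nonneg _))
        (Real.sqrt_nonneg _)
      rw [Real.le_sqrt (muProd_nonneg hμ _ _) (norm_nonneg _), ← rowSumWeight_wordOfFn_mul,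
        ← hweight]
      exact hdiag.norm_le_opNorm _
    rwa [Real.le_sqrt (supMuProd_nonneg hμ k) (norm_nonneg _)] at hle

theorem iSup_muProd_rpow_eq {k : ℕ} (hk : k ≠ 0) :
    ⨆ (f : Fin k → Fin n) (α : Word n), muProd μ (wordOfFn f) α ^ ((1 : ℝ) / k)
      = supMuProd μ k ^ ((1 : ℝ) / k) := by
  have hr : (0 : ℝ) < 1 / k := by positivity
  rw [supMuProd, iSup_rpow_of_nonneg (fun f => Real.iSup_nonneg fun α => muProd_nonneg hμ _ α)
    (bddAbove_range_iSup_muProd hμ hbdd k) hr]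
  congr 1
  ext f
  rw [iSup_rpow_of_nonneg (fun α => muProd_nonneg hμ _ α) (bddAbove_range_muProd hμ hbdd _) hr]

end SupMuProd

theorem stmt_1_general (n : ℕ) (μ : Word n → ℝ)
    (hμ : ∀ β : Word n, 1 ≤ FreeMonoid.length β → 0 ≤ μ β)
    (hbdd : BddWeights μ)
    (W : Fin n → Fock n →L[ℂ] Fock n) (hW : IsWeightedShift μ W) :
    Tendsto (fun k : ℕ => ⨆ (f : Fin k → Fin n) (α : Word n),
        muProd μ (wordOfFn f) α ^ ((1 : ℝ) / k)) atTop (nhds (jsr W)) := by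
  obtain ⟨L, hL⟩ := exists_tendsto_rpow_one_div_of_submultiplicative (supMuProd_nonneg hμ)
    (supMuProd_add_le hμ hbdd)
  have hjsr : jsr W = L := by
    refine Tendsto.limUnder_eq (hL.congr' ?_)
    filter_upwards [eventually_ne_atTop 0] with k hk
    rw [hW.norm_rowSum hμ hbdd k, ← Real.rpow_natCast, ← Real.rpow_mul (supMuProd_nonneg hμ k)]
    congr 1
    push_cast
    field_simp
  rw [hjsr]
  refine hL.congr' ?_
  filter_upwards [eventually_ne_atTop 0] with k hk
  exact (iSup_muProd_rpow_eq hμ hbdd hk).symm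

theorem stmt_1 (n : ℕ) (hn : 1 ≤ n) (μ : Word n → ℝ)
    (hμ : ∀ β : Word n, 1 ≤ FreeMonoid.length β → 0 ≤ μ β)
    (hbdd : BddWeights μ)
    (W : Fin n → Fock n →L[ℂ] Fock n) (hW : IsWeightedShift μ W) :
    Tendsto (fun k : ℕ => ⨆ (f : Fin k → Fin n) (α : Word n),
        muProd μ (wordOfFn f) α ^ ((1 : ℝ) / k)) atTop (nhds (jsr W)) :=
  stmt_1_general n μ hμ hbdd W hW

end
end

section
/- Let n ≥ 1. A sequence {a_k}_{k≥1} of complex numbers has the property that there exists an n-tuple T = (T₁,…,Tₙ) of bounded operators on the full Fock space F²(Hₙ) with a_k = ‖∑_{σ∈𝔽ₙ⁺, |σ|=k} T_σ T_σ^*‖^{1/2} for every k ≥ 1 if and only if: each a_k is a nonnegative real number, a_{k+m} ≤ a_k·a_m for all k, m ≥ 1, and either (a) there is p ≥ 0 such that a_k > 0 for 1 ≤ k ≤ p and a_k = 0 for k > p, or (b) a_k > 0 for every k ≥ 1. -/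
/-!
Write `R_k = ∑_{|σ|=k} T_σ T_σ^*`. Since `R_{k+m} = ∑_{|σ|=k} T_σ R_m T_σ^* ≤ ‖R_m‖ R_k`, the
sequence `‖R_k‖^{1/2}` is submultiplicative, and once it vanishes it stays zero.
Conversely, put `b_0 = 1` and let `S` be the weighted shift `e_α ↦ (b_{|α|+1} / b_{|α|}) e_{g₁α}`.
With `T₁ = S` and `T_i = 0` otherwise, `R_k = S^k (S^k)^*`; the weights of `S^k` telescope to
`b_{m+k} / b_m ≤ b_k`, with equality at the vacuum `m = 0`, so `‖R_k‖^{1/2} = ‖S^k‖ = b_k`.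
-/

open Filter ContinuousLinearMap
open scoped ComplexConjugate

noncomputable section

attribute [local instance] Classical.decEq

open Function

section WeightedShift

variable {ι : Type*} {p : ENNReal}

theorem rpow_norm_extend_zero {E : Type*} [NormedAddCommGroup E] {r : ℝ} (hr : r ≠ 0)
    (σ : ι → ι) (f : ι → E) :
    (fun j => ‖Function.extend σ f 0 j‖ ^ r) = Function.extend σ (fun i => ‖f i‖ ^ r) 0 := by
  funext j
  rw [apply_extend (‖·‖ ^ r)]
  congr 1
  funext j
  simp [Real.zero_rpow hr]

theorem Memℓp.extend_zero {E : Type*} [NormedAddCommGroup E] (hp : 0 < p.toReal)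
    {σ : ι → ι} (hσ : Injective σ) {f : ι → E} (hf : Memℓp f p) :
    Memℓp (Function.extend σ f 0) p := by
  rw [memℓp_gen_iff hp, rpow_norm_extend_zero hp.ne' σ f, summable_extend_zero hσ]
  exact hf.summable hp

variable {𝕜 : Type*} [NontriviallyNormedField 𝕜] [Fact (1 ≤ p)]

def lp.weightedShift (hp : 0 < p.toReal) {σ : ι → ι} (hσ : Injective σ) (v : ι → 𝕜) {M : ℝ}
    (hM : 0 ≤ M) (hv : ∀ i, ‖v i‖ ≤ M) : lp (fun _ : ι => 𝕜) p →L[𝕜] lp (fun _ : ι => 𝕜) p :=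
  have hmem (x : lp (fun _ : ι => 𝕜) p) : Memℓp (v * ⇑x) p :=
    ((lp.memℓp x).norm.const_mul M).mono fun i => by
      rw [Pi.mul_apply, norm_mul]
      exact mul_le_mul_of_nonneg_right (hv i) (norm_nonneg _)
  LinearMap.mkContinuous
    { toFun := fun x => ⟨Function.extend σ (v * ⇑x) 0, (hmem x).extend_zero hp hσ⟩
      map_add' := fun x y => lp.ext <| by
        simp only [lp.coeFn_add, mul_add, ← extend_add, add_zero]
      map_smul' := fun c x => lp.ext <| by
        change Function.extend σ (v * ⇑(c • x)) 0 = c • Function.extend σ (v * ⇑x) 0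
        rw [lp.coeFn_smul, mul_smul_comm, ← extend_smul, smul_zero] }
    M fun x => by
      refine lp.norm_le_of_tsum_le hp (mul_nonneg hM (norm_nonneg x)) ?_
      have hx := (lp.memℓp x).summable hp
      calc ∑' j, ‖Function.extend σ (v * ⇑x) 0 j‖ ^ p.toReal
          = ∑' i, ‖v i * x i‖ ^ p.toReal := by
            rw [rpow_norm_extend_zero hp.ne' σ, tsum_extend_zero hσ]; rfl
        _ ≤ ∑' i, M ^ p.toReal * ‖x i‖ ^ p.toReal := by
            refine ((hmem x).summable hp).tsum_le_tsum (fun i => ?_) (hx.mul_left _)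
            rw [norm_mul, ← Real.mul_rpow hM (norm_nonneg _)]
            gcongr
            exact hv i
        _ = (M * ‖x‖) ^ p.toReal := by
            rw [tsum_mul_left, ← lp.norm_rpow_eq_tsum hp, Real.mul_rpow hM (norm_nonneg _)]

theorem lp.weightedShift_single (hp : 0 < p.toReal) {σ : ι → ι} (hσ : Injective σ) (v : ι → 𝕜)
    {M : ℝ} (hM : 0 ≤ M) (hv : ∀ i, ‖v i‖ ≤ M) (i : ι) (z : 𝕜) :
    lp.weightedShift hp hσ v hM hv (lp.single p i z) = lp.single p (σ i) (v i * z) := by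
  refine lp.ext (funext fun j => ?_)
  change Function.extend σ (v * ⇑(lp.single p i z)) (0 : ι → 𝕜) j = _
  by_cases hj : ∃ i', σ i' = j
  · obtain ⟨i', rfl⟩ := hj
    rw [hσ.extend_apply, Pi.mul_apply]
    by_cases hi : i' = i
    · subst hi
      simp only [lp.single_apply_self]
    · rw [lp.single_apply_ne p i _ hi, lp.single_apply_ne p (σ i) _ (hσ.ne hi), mul_zero]
  · rw [extend_apply' _ _ _ hj, Pi.zero_apply,
      lp.single_apply_ne p (σ i) _ fun h => hj ⟨i, h.symm⟩]

theorem lp.norm_weightedShift_le (hp : 0 < p.toReal) {σ : ι → ι} (hσ : Injective σ) (v : ι → 𝕜)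
    {M : ℝ} (hM : 0 ≤ M) (hv : ∀ i, ‖v i‖ ≤ M) : ‖lp.weightedShift hp hσ v hM hv‖ ≤ M := by
  unfold lp.weightedShift
  exact LinearMap.mkContinuous_norm_le _ hM _

theorem lp.norm_le_of_apply_single (hp : 0 < p.toReal) {σ : ι → ι} (hσ : Injective σ)
    {v : ι → 𝕜} {M : ℝ} (hM : 0 ≤ M) (hv : ∀ i, ‖v i‖ ≤ M)
    {A : lp (fun _ : ι => 𝕜) p →L[𝕜] lp (fun _ : ι => 𝕜) p}
    (hA : ∀ i z, A (lp.single p i z) = lp.single p (σ i) (v i * z)) : ‖A‖ ≤ M := by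
  have hAW : A = lp.weightedShift hp hσ v hM hv :=
    lp.ext_continuousLinearMap (ENNReal.toReal_pos_iff.1 hp).2.ne fun i =>
      ContinuousLinearMap.ext fun z => by
        simp only [coe_comp, Function.comp_apply, lp.singleContinuousLinearMap_apply, hA,
          lp.weightedShift_single]
  rw [hAW]
  exact lp.norm_weightedShift_le hp hσ v hM hv

theorem lp.pow_apply_single_of_apply_single {σ : ι → ι} {v : ι → 𝕜}
    {A : lp (fun _ : ι => 𝕜) p →L[𝕜] lp (fun _ : ι => 𝕜) p}
    (hA : ∀ i z, A (lp.single p i z) = lp.single p (σ i) (v i * z)) (k : ℕ) (i : ι) (z : 𝕜) :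
    (A ^ k) (lp.single p i z)
      = lp.single p (σ^[k] i) ((∏ j ∈ Finset.range k, v (σ^[j] i)) * z) := by
  induction k with
  | zero => simp
  | succ k ih =>
    rw [pow_succ', mul_apply_eq_comp, ih, hA, iterate_succ_apply', Finset.prod_range_succ,
      mul_assoc, mul_left_comm]

end WeightedShift

section RowSum

variable {n : ℕ} {H : Type*} [NormedAddCommGroup H] [InnerProductSpace ℂ H]
  (T : Fin n → H →L[ℂ] H)

theorem wordOp_mul (α β : Word n) : wordOp T (α * β) = wordOp T α * wordOp T β := by
  simp [wordOp, FreeMonoid.toList_mul]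

theorem wordOp_of (i : Fin n) : wordOp T (FreeMonoid.of i) = T i := by
  simp [wordOp, FreeMonoid.toList_of]

theorem wordOfFn_cons {k : ℕ} (i : Fin n) (f : Fin k → Fin n) :
    wordOfFn (Fin.cons i f) = FreeMonoid.of i * wordOfFn f := by
  simp [wordOfFn, List.ofFn_succ, FreeMonoid.ofList_cons]

variable [CompleteSpace H]

theorem rowSum_eq_sum_mul_star (k : ℕ) :
    rowSum T k = ∑ f : Fin k → Fin n, wordOp T (wordOfFn f) * star (wordOp T (wordOfFn f)) :=
  rfl

theorem rowSum_zero : rowSum T 0 = 1 := by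
  simp [rowSum_eq_sum_mul_star, wordOp, wordOfFn]

theorem rowSum_succ (k : ℕ) :
    rowSum T (k + 1) = ∑ i : Fin n, T i * rowSum T k * star (T i) := by
  rw [rowSum_eq_sum_mul_star, ← (Fin.consEquiv fun _ => Fin n).sum_comp, Fintype.sum_prod_type]
  refine Finset.sum_congr rfl fun i _ => ?_
  rw [rowSum_eq_sum_mul_star, Finset.mul_sum, Finset.sum_mul]
  refine Finset.sum_congr rfl fun f _ => ?_
  change wordOp T (wordOfFn (Fin.cons i f)) * star (wordOp T (wordOfFn (Fin.cons i f))) = _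
  rw [wordOfFn_cons, wordOp_mul, wordOp_of, star_mul]
  simp only [mul_assoc]

theorem rowSum_nonneg (k : ℕ) : 0 ≤ rowSum T k :=
  Finset.sum_nonneg fun _ _ => mul_star_self_nonneg _

theorem rowSum_add_le (k m : ℕ) : rowSum T (k + m) ≤ ‖rowSum T m‖ • rowSum T k := by
  induction k with
  | zero =>
    simpa [rowSum_zero] using CStarAlgebra.star_right_conjugate_le_norm_smul (a := 1)
      (rowSum_nonneg T m).isSelfAdjoint
  | succ k ih =>
    rw [add_right_comm, rowSum_succ, rowSum_succ, Finset.smul_sum]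
    refine Finset.sum_le_sum fun i _ => ?_
    calc T i * rowSum T (k + m) * star (T i)
        ≤ T i * (‖rowSum T m‖ • rowSum T k) * star (T i) :=
          star_right_conjugate_le_conjugate ih (T i)
      _ = ‖rowSum T m‖ • (T i * rowSum T k * star (T i)) := by
          rw [mul_smul_comm, smul_mul_assoc]

theorem norm_rowSum_add_le (k m : ℕ) : ‖rowSum T (k + m)‖ ≤ ‖rowSum T k‖ * ‖rowSum T m‖ := by
  have h := CStarAlgebra.norm_le_norm_of_nonneg_of_le (rowSum_nonneg T (k + m))
    (rowSum_add_le T k m)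
  rwa [norm_smul, Real.norm_of_nonneg (norm_nonneg _), mul_comm] at h

theorem rowSum_pi_single (i : Fin n) (S : H →L[ℂ] H) (k : ℕ) :
    rowSum (Pi.single i S) k = S ^ k * star (S ^ k) := by
  induction k with
  | zero => simp [rowSum_zero]
  | succ k ih =>
    rw [rowSum_succ, Fintype.sum_eq_single i fun j hj => by simp [hj], ih,
      Pi.single_eq_same, pow_succ', star_mul, mul_assoc, mul_assoc, mul_assoc]

end RowSum

section Submultiplicative

theorem exists_pos_then_zero_or_forall_pos {b : ℕ → ℝ} (hnn : ∀ k, 1 ≤ k → 0 ≤ b k)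
    (hsub : ∀ k m, 1 ≤ k → 1 ≤ m → b (k + m) ≤ b k * b m) :
    (∃ p : ℕ, (∀ k, 1 ≤ k → k ≤ p → 0 < b k) ∧ ∀ k, p < k → b k = 0) ∨
      ∀ k, 1 ≤ k → 0 < b k := by
  by_cases hpos : ∀ k, 1 ≤ k → 0 < b k
  · exact Or.inr hpos
  push Not at hpos
  have hzero : ∃ q, 1 ≤ q ∧ b q = 0 := by
    obtain ⟨q, hq, hbq⟩ := hpos
    exact ⟨q, hq, le_antisymm hbq (hnn q hq)⟩
  obtain ⟨hq1, hbq⟩ := Nat.find_spec hzero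
  refine Or.inl ⟨Nat.find hzero - 1, fun k hk hkq => ?_, fun k hqk => ?_⟩
  · have hbk : b k ≠ 0 := fun h => Nat.find_min hzero (by omega) ⟨hk, h⟩
    exact (hnn k hk).lt_of_ne' hbk
  · obtain ⟨j, rfl⟩ := Nat.exists_eq_add_of_le (show Nat.find hzero ≤ k by omega)
    rcases Nat.eq_zero_or_pos j with rfl | hj
    · exact hbq
    · refine le_antisymm ?_ (hnn _ (by omega))
      simpa [hbq] using hsub _ j hq1 hj

variable {b : ℕ → ℝ}

-- Where `b m = 0` this is the junk value `b (m + 1) / 0 = 0`; submultiplicativity then makes `b`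
-- vanish from `m` on, so the weights still telescope (`prod_shiftWeight_mul`).
def shiftWeight (b : ℕ → ℝ) (m : ℕ) : ℝ := b (m + 1) / b m

theorem shiftWeight_nonneg (hnn : ∀ k, 0 ≤ b k) (m : ℕ) : 0 ≤ shiftWeight b m :=
  div_nonneg (hnn _) (hnn _)

theorem prod_shiftWeight_mul (hnn : ∀ k, 0 ≤ b k) (hsub : ∀ k m, b (k + m) ≤ b k * b m)
    (m k : ℕ) : (∏ j ∈ Finset.range k, shiftWeight b (m + j)) * b m = b (m + k) := by
  induction k with
  | zero => simp
  | succ k ih =>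
    rw [Finset.prod_range_succ, mul_right_comm, ih, shiftWeight, ← add_assoc]
    rcases (hnn (m + k)).eq_or_lt with h | h
    · have h1 : b (m + k + 1) ≤ 0 := by simpa [← h] using hsub (m + k) 1
      rw [← h, div_zero, mul_zero, le_antisymm h1 (hnn _)]
    · exact mul_div_cancel₀ _ h.ne'

theorem prod_shiftWeight_le (hb0 : b 0 = 1) (hnn : ∀ k, 0 ≤ b k)
    (hsub : ∀ k m, b (k + m) ≤ b k * b m) (m k : ℕ) :
    ∏ j ∈ Finset.range k, shiftWeight b (m + j) ≤ b k := by
  rcases (hnn m).eq_or_lt with hm | hm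
  · cases k with
    | zero => simp [hb0]
    | succ k =>
      rw [Finset.prod_range_succ', add_zero, shiftWeight, ← hm, div_zero, mul_zero]
      exact hnn _
  · refine le_of_mul_le_mul_right ?_ hm
    rw [prod_shiftWeight_mul hnn hsub, mul_comm (b k)]
    exact hsub m k

end Submultiplicative

section FockShift

variable {n : ℕ} {b : ℕ → ℝ}

theorem FreeMonoid.length_iterate_of_mul {α : Type*} (a : α) (j : ℕ) (w : FreeMonoid α) :
    ((FreeMonoid.of a * ·)^[j] w).length = w.length + j := by
  induction j with
  | zero => rfl
  | succ j ih => rw [iterate_succ_apply', FreeMonoid.length_mul, ih, FreeMonoid.length_of]; ring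

theorem norm_pow_eq_of_apply_single (hb0 : b 0 = 1) (hnn : ∀ k, 0 ≤ b k)
    (hsub : ∀ k m, b (k + m) ≤ b k * b m) {i : Fin n} {S : Fock n →L[ℂ] Fock n}
    (hS : ∀ α z, S (lp.single 2 α z)
      = lp.single 2 (FreeMonoid.of i * α) ((shiftWeight b α.length : ℂ) * z)) (k : ℕ) :
    ‖S ^ k‖ = b k := by
  have hpow := lp.pow_apply_single_of_apply_single hS k
  simp only [FreeMonoid.length_iterate_of_mul, ← Complex.ofReal_prod] at hpow
  have hweight (α : Word n) :
      ‖((∏ j ∈ Finset.range k, shiftWeight b (α.length + j) : ℝ) : ℂ)‖ ≤ b k := by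
    rw [Complex.norm_real, Real.norm_of_nonneg
      (Finset.prod_nonneg fun _ _ => shiftWeight_nonneg hnn _)]
    exact prod_shiftWeight_le hb0 hnn hsub _ k
  refine le_antisymm
    (lp.norm_le_of_apply_single (by norm_num) ((mul_right_injective _).iterate k) (hnn k)
      hweight hpow) ?_
  have hvac : ∏ j ∈ Finset.range k, shiftWeight b (0 + j) = b k := by
    simpa [hb0] using prod_shiftWeight_mul hnn hsub 0 k
  have h := (S ^ k).unit_le_opNorm (lp.single 2 1 1) (by rw [lp.norm_single (by norm_num)]; simp)
  rwa [hpow, lp.norm_single (by norm_num), FreeMonoid.length_one, hvac, mul_one,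
    Complex.norm_real, Real.norm_of_nonneg (hnn k)] at h

theorem exists_sqrt_norm_rowSum_eq_of_zero_eq_one (i : Fin n) (hb0 : b 0 = 1)
    (hnn : ∀ k, 0 ≤ b k) (hsub : ∀ k m, b (k + m) ≤ b k * b m) :
    ∃ T : Fin n → Fock n →L[ℂ] Fock n, ∀ k, Real.sqrt ‖rowSum T k‖ = b k := by
  have hweight (α : Word n) : ‖(shiftWeight b α.length : ℂ)‖ ≤ b 1 := by
    rw [Complex.norm_real, Real.norm_of_nonneg (shiftWeight_nonneg hnn _)]
    simpa using prod_shiftWeight_le hb0 hnn hsub α.length 1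
  let S := lp.weightedShift (p := 2) (by norm_num) (mul_right_injective (FreeMonoid.of i)) _
    (hnn 1) hweight
  refine ⟨Pi.single i S, fun k => ?_⟩
  rw [rowSum_pi_single, CStarRing.norm_self_mul_star,
    norm_pow_eq_of_apply_single hb0 hnn hsub (lp.weightedShift_single _ _ _ _ _) k,
    Real.sqrt_mul_self (hnn k)]

theorem exists_sqrt_norm_rowSum_eq (i : Fin n) (hnn : ∀ k, 1 ≤ k → 0 ≤ b k)
    (hsub : ∀ k m, 1 ≤ k → 1 ≤ m → b (k + m) ≤ b k * b m) :
    ∃ T : Fin n → Fock n →L[ℂ] Fock n, ∀ k, 1 ≤ k → Real.sqrt ‖rowSum T k‖ = b k := by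
  have hc0 : update b 0 1 0 = 1 := update_self _ _ _
  have hc (k : ℕ) (hk : 1 ≤ k) : update b 0 1 k = b k := update_of_ne (by omega) _ _
  have hcnn (k : ℕ) : 0 ≤ update b 0 1 k := by
    rcases Nat.eq_zero_or_pos k with rfl | hk
    · simp
    · simpa [hc k hk] using hnn k hk
  have hcsub (k m : ℕ) : update b 0 1 (k + m) ≤ update b 0 1 k * update b 0 1 m := by
    rcases Nat.eq_zero_or_pos k with rfl | hk
    · simp
    rcases Nat.eq_zero_or_pos m with rfl | hm
    · simp
    rw [hc k hk, hc m hm, hc _ (by omega)]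
    exact hsub k m hk hm
  obtain ⟨T, hT⟩ := exists_sqrt_norm_rowSum_eq_of_zero_eq_one i hc0 hcnn hcsub
  exact ⟨T, fun k hk => (hT k).trans (hc k hk)⟩

end FockShift

theorem stmt_2 (n : ℕ) (hn : 1 ≤ n) (a : ℕ → ℂ) :
    (∃ T : Fin n → Fock n →L[ℂ] Fock n,
        ∀ k : ℕ, 1 ≤ k → a k = (Real.sqrt ‖rowSum T k‖ : ℂ)) ↔
      ∃ b : ℕ → ℝ,
        (∀ k, 1 ≤ k → a k = (b k : ℂ)) ∧
        (∀ k, 1 ≤ k → 0 ≤ b k) ∧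
        (∀ k m, 1 ≤ k → 1 ≤ m → b (k + m) ≤ b k * b m) ∧
        ((∃ p : ℕ, (∀ k, 1 ≤ k → k ≤ p → 0 < b k) ∧ ∀ k, p < k → b k = 0) ∨
          ∀ k, 1 ≤ k → 0 < b k) := by
  constructor
  · rintro ⟨T, hT⟩
    have hsub (k m : ℕ) (_ : 1 ≤ k) (_ : 1 ≤ m) :
        √‖rowSum T (k + m)‖ ≤ √‖rowSum T k‖ * √‖rowSum T m‖ := by
      rw [← Real.sqrt_mul (norm_nonneg _)]
      exact Real.sqrt_le_sqrt (norm_rowSum_add_le T k m)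
    have hnn (k : ℕ) (_ : 1 ≤ k) : 0 ≤ √‖rowSum T k‖ := Real.sqrt_nonneg _
    exact ⟨_, hT, hnn, hsub, exists_pos_then_zero_or_forall_pos hnn hsub⟩
  · rintro ⟨b, hab, hnn, hsub, -⟩
    obtain ⟨T, hT⟩ := exists_sqrt_norm_rowSum_eq ⟨0, hn⟩ hnn hsub
    exact ⟨T, fun k hk => by rw [hab k hk, hT k hk]⟩

end
end

section
/- Let n ≥ 1 and let W = (W₁,…,Wₙ) be the weighted left multi-shift on F²(Hₙ) associated with a weight sequence μ = {μ_β}_{|β|≥1} of strictly positive real numbers with sup_{α∈𝔽ₙ⁺} μ_{g_iα} < ∞ for each i. Then every closed subspace M ⊆ F²(Hₙ) with M ≠ {0} and W_i M ⊆ M for all i ∈ {1,…,n} is infinite-dimensional. -/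
open Filter ContinuousLinearMap
open scoped ComplexConjugate

noncomputable section

attribute [local instance] Classical.decEq

/-!
A nonzero finite-dimensional invariant subspace would contain an eigenvector of `W₁`, since `ℂ`
is algebraically closed. But a weighted shift with nonzero weights has no eigenvectors: if
`W x = c x` and `α` is a word of minimal length with `x α ≠ 0`, the coordinate of `W x` at `α`
vanishes, forcing `c = 0`, while its coordinate at `g₁ α` is the nonzero number `μ (g₁ α) x α`.
-/

lemma innerSL_fockE_apply {n : ℕ} (β : Word n) (x : Fock n) :
    innerSL ℂ (fockE β) x = x β := by
  simp [fockE, lp.inner_single_left, RCLike.inner_apply]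

lemma fockE_smul {n : ℕ} (γ : Word n) (z : ℂ) : z • fockE γ = lp.single 2 γ z := by
  rw [fockE, ← lp.single_smul, smul_eq_mul, mul_one]

lemma Fock.exists_minimal_length_apply_ne_zero {n : ℕ} {x : Fock n} (hx : x ≠ 0) :
    ∃ α : Word n, x α ≠ 0 ∧ ∀ γ : Word n, γ.length < α.length → x γ = 0 := by
  have hsupp : ∃ γ, x γ ≠ 0 := by
    by_contra! h
    exact hx (lp.ext (funext h))
  obtain ⟨α, hα, hmin⟩ := (measure FreeMonoid.length).wf.has_min {γ | x γ ≠ 0} hsupp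
  exact ⟨α, hα, fun γ hγ => not_not.mp fun h => hmin γ h hγ⟩

namespace IsWeightedShift

variable {n : ℕ} {μ : Word n → ℝ} {W : Fin n → Fock n →L[ℂ] Fock n}

lemma hasSum_apply (hW : IsWeightedShift μ W) (i : Fin n) (x : Fock n) (β : Word n) :
    HasSum (fun γ => if β = FreeMonoid.of i * γ then (μ β : ℂ) * x γ else 0) (W i x β) := by
  have hx : HasSum (fun γ => lp.single 2 γ (x γ)) x := lp.hasSum_single (by norm_num) x
  have h := hx.mapL ((innerSL ℂ (fockE β)).comp (W i))
  rw [comp_apply, innerSL_fockE_apply] at h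
  refine h.congr_fun fun γ => ?_
  rw [comp_apply, ← fockE_smul, map_smul, hW i γ, smul_smul, fockE_smul, innerSL_fockE_apply]
  split_ifs with hβ
  · rw [← hβ, lp.single_apply_self, mul_comm]
  · rw [lp.single_apply_ne _ _ _ hβ]

lemma apply_of_mul (hW : IsWeightedShift μ W) (i : Fin n) (x : Fock n) (γ : Word n) :
    W i x (FreeMonoid.of i * γ) = μ (FreeMonoid.of i * γ) * x γ := by
  refine (hW.hasSum_apply i x _).unique ?_
  refine (hasSum_ite_eq γ _).congr_fun fun γ' => ?_
  rcases eq_or_ne γ' γ with rfl | h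
  · simp
  · simp [h, h.symm]

lemma apply_eq_zero (hW : IsWeightedShift μ W) (i : Fin n) (x : Fock n) {β : Word n}
    (hβ : ∀ γ, β ≠ FreeMonoid.of i * γ) : W i x β = 0 := by
  refine (hW.hasSum_apply i x β).unique ?_
  simp_rw [if_neg (hβ _)]
  exact hasSum_zero

lemma apply_eq_zero_of_length_le (hW : IsWeightedShift μ W) (i : Fin n) {x : Fock n} {d : ℕ}
    (hx : ∀ γ : Word n, γ.length < d → x γ = 0) {β : Word n} (hβ : β.length ≤ d) :
    W i x β = 0 := by
  by_cases h : ∃ γ, β = FreeMonoid.of i * γ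
  · obtain ⟨γ, rfl⟩ := h
    rw [hW.apply_of_mul, hx γ, mul_zero]
    rw [FreeMonoid.length_mul, FreeMonoid.length_of] at hβ
    omega
  · exact hW.apply_eq_zero i x (not_exists.mp h)

lemma apply_ne_smul (hW : IsWeightedShift μ W) {i : Fin n}
    (hμ : ∀ α : Word n, μ (FreeMonoid.of i * α) ≠ 0) {x : Fock n} (hx : x ≠ 0) (c : ℂ) :
    W i x ≠ c • x := by
  intro hxc
  obtain ⟨α, hα, hmin⟩ := Fock.exists_minimal_length_apply_ne_zero hx
  have hc : c = 0 := by
    have h := congrArg (· α) hxc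
    simp only [hW.apply_eq_zero_of_length_le i hmin le_rfl, lp.coeFn_smul, Pi.smul_apply,
      smul_eq_mul] at h
    exact (mul_eq_zero.mp h.symm).resolve_right hα
  have h := congrArg (· (FreeMonoid.of i * α)) hxc
  simp only [hW.apply_of_mul, hc, zero_smul, lp.coeFn_zero, Pi.zero_apply] at h
  exact mul_ne_zero (Complex.ofReal_ne_zero.mpr (hμ α)) hα h

end IsWeightedShift

theorem stmt_6_general (n : ℕ) (hn : 1 ≤ n) (μ : Word n → ℝ)
    (hμ : ∀ β : Word n, 1 ≤ FreeMonoid.length β → 0 < μ β)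
    (W : Fin n → Fock n →L[ℂ] Fock n) (hW : IsWeightedShift μ W)
    (M : Submodule ℂ (Fock n)) (hM0 : M ≠ ⊥)
    (hinv : ∀ (i : Fin n), ∀ x ∈ M, W i x ∈ M) :
    ¬ FiniteDimensional ℂ M := by
  intro _
  have : Nontrivial M := Submodule.nontrivial_iff_ne_bot.mpr hM0
  let i : Fin n := ⟨0, hn⟩
  obtain ⟨c, hc⟩ := Module.End.exists_eigenvalue ((W i : Fock n →ₗ[ℂ] Fock n).restrict (hinv i))
  obtain ⟨v, hv⟩ := hc.exists_hasEigenvector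
  have hμi : ∀ α : Word n, μ (FreeMonoid.of i * α) ≠ 0 := fun α =>
    (hμ _ (by rw [FreeMonoid.length_mul, FreeMonoid.length_of]; omega)).ne'
  exact hW.apply_ne_smul hμi (x := v) (by simpa using hv.2) c
    (congrArg Subtype.val hv.apply_eq_smul)

theorem stmt_6 (n : ℕ) (hn : 1 ≤ n) (μ : Word n → ℝ)
    (hμ : ∀ β : Word n, 1 ≤ FreeMonoid.length β → 0 < μ β)
    (hbdd : BddWeights μ)
    (W : Fin n → Fock n →L[ℂ] Fock n) (hW : IsWeightedShift μ W)
    (M : Submodule ℂ (Fock n)) (hMc : IsClosed (M : Set (Fock n))) (hM0 : M ≠ ⊥)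
    (hinv : ∀ (i : Fin n), ∀ x ∈ M, W i x ∈ M) :
    ¬ FiniteDimensional ℂ M :=
  stmt_6_general n hn μ hμ W hW M hM0 hinv

end
end

section
/- Let n ≥ 1, let H be a separable Hilbert space, and let K = (K₁,…,Kₙ) be an n-tuple of compact operators on H with r(K) = 0. Then the n-tuple (K₁⊗I,…,Kₙ⊗I) of operators on ℓ²(𝔽ₙ⁺; H), where K_i⊗I acts componentwise by (K_i⊗I)( (h_α)_{α} ) = (K_i h_α)_{α}, is jointly quasi-similar to an n-tuple (L₁,…,Lₙ) of compact operators on ℓ²(𝔽ₙ⁺; H): there exist quasi-affinities X and Y on ℓ²(𝔽ₙ⁺; H) — bounded, injective operators with dense range — such that (K_i^*⊗I)X = X L_i^* and Y(K_i^*⊗I) = L_i^* Y for every i ∈ {1,…,n}. -/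
open Filter ContinuousLinearMap
open scoped ComplexConjugate

noncomputable section

attribute [local instance] Classical.decEq

/-!
Since `r(K) = 0`, for every `δ > 0` the series `P = ∑ₖ δ^(-2k) ∑_{|α|=k} K_α^* K_α` converges in
norm; its `k = 0` term gives `1 ≤ P`, and shifting the series by one letter gives
`K_i^* P K_i ≤ δ² P`. Hence `S = √P` is invertible and `‖S K_i S⁻¹‖ ≤ δ` (Rota's similarity
argument). Choose such `S_α` for weights `δ_α → 0` along the words `α`. The block-diagonal operator
`L_i = ⊕_α S_α K_i S_α⁻¹` is then compact, its blocks being compact with norms tending to zero.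
The bounded diagonal operators `X = ⊕_α c_α S_α^*` and `Y = ⊕_α c'_α (S_α^*)⁻¹`, with scalars
`c_α, c'_α ≠ 0` keeping them bounded, have invertible blocks, so they are injective with dense
range, and they intertwine `K_i^* ⊗ I` with `L_i^*` block by block.
-/

open scoped Topology ENNReal

section CStarAlgebra

variable {A : Type*} [CStarAlgebra A] [PartialOrder A] [StarOrderedRing A]

lemma exists_unit_norm_conj_le_one {ι : Type*} {p : A} (hp : 1 ≤ p) {t : ι → A}
    (ht : ∀ i, star (t i) * p * t i ≤ p) : ∃ u : Aˣ, ∀ i, ‖(u : A) * t i * ↑u⁻¹‖ ≤ 1 := by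
  have hp0 : IsStrictlyPositive p := isStrictlyPositive_one.of_le hp
  obtain ⟨u, hu⟩ := hp0.isUnit_cfcSqrt
  have hpu : p = star (u : A) * u := by
    rw [hu, (IsSelfAdjoint.of_nonneg (CFC.sqrt_nonneg p)).star_eq,
      CFC.sqrt_mul_sqrt_self p hp0.nonneg]
  refine ⟨u, fun i => ?_⟩
  set x := (u : A) * t i * ↑u⁻¹
  have hx : star x * x ≤ 1 := calc
    star x * x = star (↑u⁻¹ : A) * (star (t i) * p * t i) * ↑u⁻¹ := by
      simp only [x, star_mul, hpu, mul_assoc]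
    _ ≤ star (↑u⁻¹ : A) * p * ↑u⁻¹ := star_left_conjugate_le_conjugate (ht i) _
    _ = 1 := by
      rw [hpu, mul_assoc, mul_assoc, Units.mul_inv, mul_one, ← star_mul, Units.mul_inv, star_one]
  have := (CStarAlgebra.norm_le_one_iff_of_nonneg (star x * x) (star_mul_self_nonneg x)).2 hx
  rw [CStarRing.norm_star_mul_self, ← sq] at this
  exact pow_le_one_iff_of_nonneg (norm_nonneg _) two_ne_zero |>.1 this

end CStarAlgebra

section Words

variable {n : ℕ} {H : Type*} [NormedAddCommGroup H] [InnerProductSpace ℂ H]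

lemma wordOp_wordOfFn_snoc (T : Fin n → H →L[ℂ] H) {k : ℕ} (f : Fin k → Fin n) (i : Fin n) :
    wordOp T (wordOfFn (Fin.snoc f i)) = wordOp T (wordOfFn f) * T i := by
  rw [wordOp, wordOfFn, wordOp, wordOfFn, FreeMonoid.toList_ofList, FreeMonoid.toList_ofList,
    List.ofFn_succ']
  simp [List.concat_eq_append]

lemma wordOp_smul_wordOfFn (T : Fin n → H →L[ℂ] H) (c : ℂ) {k : ℕ} (f : Fin k → Fin n) :
    wordOp (fun i => c • T i) (wordOfFn f) = c ^ k • wordOp T (wordOfFn f) := by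
  induction k with
  | zero => simp [wordOp, wordOfFn]
  | succ k ih =>
    rw [← Fin.snoc_init_self f, wordOp_wordOfFn_snoc, wordOp_wordOfFn_snoc, ih, pow_succ,
      smul_mul_smul_comm]

end Words

section ColumnSums

variable {n : ℕ} {H : Type*} [NormedAddCommGroup H] [InnerProductSpace ℂ H] [CompleteSpace H]

def colSum (T : Fin n → H →L[ℂ] H) (k : ℕ) : H →L[ℂ] H :=
  ∑ f : Fin k → Fin n, star (wordOp T (wordOfFn f)) * wordOp T (wordOfFn f)

lemma colSum_zero (T : Fin n → H →L[ℂ] H) : colSum T 0 = 1 := by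
  simp [colSum, wordOp, wordOfFn]

lemma colSum_succ (T : Fin n → H →L[ℂ] H) (k : ℕ) :
    colSum T (k + 1) = ∑ i, star (T i) * colSum T k * T i := by
  have hsnoc (i : Fin n) (f : Fin k → Fin n) :
      Fin.snocEquiv (fun _ => Fin n) (i, f) = Fin.snoc f i := rfl
  rw [colSum, ← (Fin.snocEquiv fun _ => Fin n).sum_comp, Fintype.sum_prod_type]
  simp only [hsnoc, wordOp_wordOfFn_snoc, colSum, Finset.mul_sum, Finset.sum_mul, star_mul,
    mul_assoc]

lemma colSum_nonneg (T : Fin n → H →L[ℂ] H) (k : ℕ) : 0 ≤ colSum T k :=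
  Finset.sum_nonneg fun _ _ => star_mul_self_nonneg _

lemma star_mul_colSum_mul_le_colSum_succ (T : Fin n → H →L[ℂ] H) (k : ℕ) (i : Fin n) :
    star (T i) * colSum T k * T i ≤ colSum T (k + 1) := by
  rw [colSum_succ]
  exact Finset.single_le_sum (fun j _ => star_left_conjugate_nonneg (colSum_nonneg T k) _)
    (Finset.mem_univ i)

lemma exists_unit_norm_conj_le_one_of_summable_colSum (T : Fin n → H →L[ℂ] H)
    (h : Summable (colSum T)) :
    ∃ u : (H →L[ℂ] H)ˣ, ∀ i, ‖(u : H →L[ℂ] H) * T i * ↑u⁻¹‖ ≤ 1 := by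
  have hsucc : Summable fun k => colSum T (k + 1) := (summable_nat_add_iff 1).2 h
  refine exists_unit_norm_conj_le_one (p := ∑' k, colSum T k) ?_ fun i => ?_
  · calc 1 = colSum T 0 := (colSum_zero T).symm
      _ ≤ ∑' k, colSum T k := h.le_tsum 0 fun k _ => colSum_nonneg T k
  · calc star (T i) * (∑' k, colSum T k) * T i = ∑' k, star (T i) * colSum T k * T i := by
          rw [← h.tsum_mul_left, ← (h.mul_left _).tsum_mul_right]
      _ ≤ ∑' k, colSum T (k + 1) :=
          Summable.tsum_le_tsum (fun k => star_mul_colSum_mul_le_colSum_succ T k i)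
            ((h.mul_left _).mul_right _) hsucc
      _ ≤ ∑' k, colSum T k := by
          rw [h.tsum_eq_zero_add]
          exact le_add_of_nonneg_left (colSum_nonneg T 0)

lemma norm_wordOp_sq_le_norm_rowSum (T : Fin n → H →L[ℂ] H) {k : ℕ} (f : Fin k → Fin n) :
    ‖wordOp T (wordOfFn f)‖ ^ 2 ≤ ‖rowSum T k‖ := by
  rw [sq, ← CStarRing.norm_self_mul_star]
  refine CStarAlgebra.norm_le_norm_of_nonneg_of_le
    (mul_star_self_nonneg (wordOp T (wordOfFn f))) ?_
  simp only [rowSum, ← star_eq_adjoint]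
  exact Finset.single_le_sum (fun g _ => mul_star_self_nonneg (wordOp T (wordOfFn g)))
    (Finset.mem_univ f)

lemma norm_colSum_smul_le (T : Fin n → H →L[ℂ] H) (c : ℂ) (k : ℕ) :
    ‖colSum (fun i => c • T i) k‖ ≤ (‖c‖ ^ 2 * n) ^ k * ‖rowSum T k‖ := by
  calc ‖colSum (fun i => c • T i) k‖
      ≤ ∑ f : Fin k → Fin n, ‖wordOp (fun i => c • T i) (wordOfFn f)‖ ^ 2 := by
        refine (norm_sum_le _ _).trans_eq ?_
        simp only [CStarRing.norm_star_mul_self, sq]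
    _ ≤ ∑ _f : Fin k → Fin n, (‖c‖ ^ 2) ^ k * ‖rowSum T k‖ := by
        gcongr with f
        rw [wordOp_smul_wordOfFn, norm_smul, mul_pow, norm_pow, ← pow_mul, ← pow_mul']
        gcongr
        exact norm_wordOp_sq_le_norm_rowSum T f
    _ = (‖c‖ ^ 2 * n) ^ k * ‖rowSum T k‖ := by
        rw [Finset.sum_const, Finset.card_univ, Fintype.card_fun, Fintype.card_fin,
          Fintype.card_fin, nsmul_eq_mul]
        push_cast
        ring

lemma eventually_norm_rowSum_le_pow (T : Fin n → H →L[ℂ] H)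
    (hq : Tendsto (fun k : ℕ => ‖rowSum T k‖ ^ ((1 : ℝ) / (2 * k))) atTop (𝓝 0))
    {θ : ℝ} (hθ : 0 < θ) : ∀ᶠ k : ℕ in atTop, ‖rowSum T k‖ ≤ θ ^ k := by
  filter_upwards [hq.eventually_lt_const (lt_min hθ one_pos), eventually_ge_atTop 1] with k hk hk1
  have h2k : (2 * k : ℕ) ≠ 0 := by omega
  calc ‖rowSum T k‖ = (‖rowSum T k‖ ^ ((2 * k : ℕ) : ℝ)⁻¹) ^ (2 * k) :=
        (Real.rpow_inv_natCast_pow (norm_nonneg _) h2k).symm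
    _ ≤ min θ 1 ^ (2 * k) := by
        refine pow_le_pow_left₀ (by positivity) ?_ _
        simpa [one_div] using hk.le
    _ ≤ min θ 1 ^ k := pow_le_pow_of_le_one (by positivity) (min_le_right _ _) (by omega)
    _ ≤ θ ^ k := pow_le_pow_left₀ (by positivity) (min_le_left _ _) _

lemma summable_colSum_smul (T : Fin n → H →L[ℂ] H)
    (hq : Tendsto (fun k : ℕ => ‖rowSum T k‖ ^ ((1 : ℝ) / (2 * k))) atTop (𝓝 0)) (c : ℂ) :
    Summable (colSum fun i => c • T i) := by
  set θ : ℝ := (2 * (‖c‖ ^ 2 * n + 1))⁻¹ with hθ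
  refine summable_geometric_two.of_norm_bounded_eventually_nat ?_
  filter_upwards [eventually_norm_rowSum_le_pow T hq (θ := θ) (by positivity)] with k hk
  calc ‖colSum (fun i => c • T i) k‖ ≤ (‖c‖ ^ 2 * n) ^ k * θ ^ k :=
        (norm_colSum_smul_le T c k).trans (by gcongr)
    _ = (‖c‖ ^ 2 * n * θ) ^ k := (mul_pow _ _ _).symm
    _ ≤ (1 / 2) ^ k := by
        gcongr
        rw [hθ, ← div_eq_mul_inv, div_le_iff₀ (by positivity)]
        linarith

lemma exists_unit_norm_conj_le (T : Fin n → H →L[ℂ] H)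
    (hq : Tendsto (fun k : ℕ => ‖rowSum T k‖ ^ ((1 : ℝ) / (2 * k))) atTop (𝓝 0))
    {δ : ℝ} (hδ : 0 < δ) : ∃ u : (H →L[ℂ] H)ˣ, ∀ i, ‖(u : H →L[ℂ] H) * T i * ↑u⁻¹‖ ≤ δ := by
  obtain ⟨u, hu⟩ := exists_unit_norm_conj_le_one_of_summable_colSum _
    (summable_colSum_smul T hq (δ⁻¹ : ℝ))
  refine ⟨u, fun i => ?_⟩
  have := hu i
  rwa [mul_smul_comm, smul_mul_assoc, norm_smul, Complex.norm_real, Real.norm_eq_abs,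
    abs_of_pos (inv_pos.2 hδ), inv_mul_le_iff₀ hδ, mul_one] at this

end ColumnSums

lemma lp.norm_le_mul_norm_of_forall_norm_apply_le {ι : Type*} {p : ℝ≥0∞} [Fact (1 ≤ p)]
    {E F : ι → Type*} [∀ i, NormedAddCommGroup (E i)] [∀ i, NormedAddCommGroup (F i)]
    {x : lp E p} {y : lp F p} {C : ℝ} (hC : 0 ≤ C) (h : ∀ i, ‖y i‖ ≤ C * ‖x i‖) :
    ‖y‖ ≤ C * ‖x‖ := by
  have hp : p ≠ 0 := (zero_lt_one.trans_le Fact.out).ne'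
  calc ‖y‖ ≤ ‖C • lp.toNorm x‖ := lp.norm_mono hp fun i => by
        simpa [lp.toNorm, abs_of_nonneg hC] using h i
    _ = C * ‖x‖ := by rw [lp.norm_const_smul hp, lp.norm_toNorm, Real.norm_of_nonneg hC]

section Diagonal

variable {𝕜 ι : Type*} [NontriviallyNormedField 𝕜] {E F : Type*}
  [NormedAddCommGroup E] [NormedSpace 𝕜 E] [NormedAddCommGroup F] [NormedSpace 𝕜 F]
  {p : ℝ≥0∞} [Fact (1 ≤ p)]

lemma exists_norm_apply_le_mul_norm_of_bddAbove {D : ι → E →L[𝕜] F}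
    (hD : BddAbove (Set.range fun i => ‖D i‖)) : ∃ C, 0 ≤ C ∧ ∀ i x, ‖D i x‖ ≤ C * ‖x‖ := by
  obtain ⟨C, hC⟩ := hD
  exact ⟨max C 0, le_max_right _ _, fun i x => (D i).le_of_opNorm_le
    ((hC ⟨i, rfl⟩).trans (le_max_left _ _)) x⟩

def diagOp (D : ι → E →L[𝕜] F) (hD : BddAbove (Set.range fun i => ‖D i‖)) :
    lp (fun _ : ι => E) p →L[𝕜] lp (fun _ : ι => F) p :=
  LinearMap.mkContinuousOfExistsBound
    { toFun x := ⟨fun i => D i (x i), by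
        obtain ⟨C, -, hC⟩ := exists_norm_apply_le_mul_norm_of_bddAbove hD
        exact ((lp.memℓp x).norm.const_mul C).mono fun i => hC i (x i)⟩
      map_add' x y := lp.ext <| funext fun i => map_add (D i) (x i) (y i)
      map_smul' c x := lp.ext <| funext fun i => map_smul (D i) c (x i) }
    (by
      obtain ⟨C, hC0, hC⟩ := exists_norm_apply_le_mul_norm_of_bddAbove hD
      exact ⟨C, fun x => lp.norm_le_mul_norm_of_forall_norm_apply_le hC0 fun i => hC i (x i)⟩)

lemma diagOp_comp_diagOp_eq {A B A' B' : ι → E →L[𝕜] E}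
    {hA : BddAbove (Set.range fun i => ‖A i‖)} {hB : BddAbove (Set.range fun i => ‖B i‖)}
    {hA' : BddAbove (Set.range fun i => ‖A' i‖)} {hB' : BddAbove (Set.range fun i => ‖B' i‖)}
    (h : ∀ i, A i ∘L B i = A' i ∘L B' i) :
    diagOp (p := p) A hA ∘L diagOp B hB = diagOp A' hA' ∘L diagOp B' hB' := by
  ext x i
  exact congrArg (· (x i)) (h i)

variable {D : ι → E →L[𝕜] F} {hD : BddAbove (Set.range fun i => ‖D i‖)}

@[simp]
lemma diagOp_apply (x : lp (fun _ : ι => E) p) (i : ι) :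
    diagOp (p := p) D hD x i = D i (x i) :=
  rfl

lemma diagOp_single (i : ι) (v : E) :
    diagOp (p := p) D hD (lp.single p i v) = lp.single p i (D i v) := by
  ext j
  by_cases hj : j = i
  · subst hj; simp
  · simp [Pi.single_eq_of_ne hj]

lemma diagOp_injective (h : ∀ i, Function.Injective (D i)) :
    Function.Injective (diagOp (p := p) D hD) := fun x y hxy =>
  lp.ext <| funext fun i => h i <| by simpa using congrArg (· i) hxy

lemma denseRange_diagOp (hp : p ≠ ⊤) (h : ∀ i, Function.Surjective (D i)) :
    DenseRange (diagOp (p := p) D hD) := by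
  intro y
  choose x hx using fun i => h i (y i)
  refine mem_closure_of_tendsto (lp.hasSum_single hp y) (Eventually.of_forall fun s => ?_)
  exact ⟨∑ i ∈ s, lp.single p i (x i), by simp [map_sum, diagOp_single, hx]⟩

lemma isCompactOperator_diagOp [CompleteSpace F] (hcpt : ∀ i, IsCompactOperator (D i))
    (hlim : Tendsto (fun i => ‖D i‖) cofinite (𝓝 0)) :
    IsCompactOperator (diagOp (p := p) D hD) := by
  set T : Finset ι → lp (fun _ : ι => E) p →L[𝕜] lp (fun _ : ι => F) p := fun s =>
    ∑ i ∈ s, lp.singleContinuousLinearMap 𝕜 (fun _ => F) p i ∘L D i ∘L lp.evalCLM 𝕜 _ p i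
  have hT (s : Finset ι) (x : lp (fun _ : ι => E) p) (j : ι) :
      T s x j = if j ∈ s then D j (x j) else 0 := by
    simp only [T, _root_.sum_apply, lp.coeFn_sum, Finset.sum_apply]
    exact Finset.sum_pi_single j (fun i => D i (x i)) s
  have hblock (i : ι) : IsCompactOperator (lp.singleContinuousLinearMap 𝕜 (fun _ => F) p i ∘L
      D i ∘L lp.evalCLM 𝕜 (fun _ => E) p i) := by
    rw [coe_comp, coe_comp]
    exact ((hcpt i).comp_clm _).clm_comp _
  refine isCompactOperator_of_tendsto (l := atTop) (F := T) ?_ (Eventually.of_forall fun s =>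
    Submodule.sum_mem (compactOperator _ _ _) fun i _ => hblock i)
  refine Metric.tendsto_atTop.2 fun ε hε => ?_
  have hfin := eventually_cofinite.1 (hlim.eventually (gt_mem_nhds (half_pos hε)))
  refine ⟨hfin.toFinset, fun s hs => ?_⟩
  have hrem : ‖diagOp D hD - T s‖ ≤ ε / 2 := by
    refine opNorm_le_bound _ (half_pos hε).le fun x => ?_
    refine lp.norm_le_mul_norm_of_forall_norm_apply_le (half_pos hε).le fun j => ?_
    rw [_root_.sub_apply, lp.coeFn_sub, Pi.sub_apply, diagOp_apply, hT]
    split_ifs with hj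
    · simpa using by positivity
    · rw [sub_zero]
      refine (D j).le_of_opNorm_le ?_ (x j)
      by_contra! h
      exact hj (hs (hfin.mem_toFinset.2 (by simpa using h.le)))
  rw [dist_eq_norm']
  linarith

end Diagonal

section DiagonalAdjoint

variable {𝕜 ι : Type*} [RCLike 𝕜] {E F : Type*}
  [NormedAddCommGroup E] [InnerProductSpace 𝕜 E] [CompleteSpace E]
  [NormedAddCommGroup F] [InnerProductSpace 𝕜 F] [CompleteSpace F]

lemma adjoint_diagOp (D : ι → E →L[𝕜] F) (hD : BddAbove (Set.range fun i => ‖D i‖)) :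
    adjoint (diagOp (p := 2) D hD) = diagOp (fun i => adjoint (D i)) (by simpa using hD) := by
  refine ((eq_adjoint_iff _ _).2 fun x y => ?_).symm
  simp only [lp.inner_eq_tsum, diagOp_apply, adjoint_inner_left]

end DiagonalAdjoint

lemma exists_pos_tendsto_cofinite_zero (ι : Type*) [Countable ι] :
    ∃ δ : ι → ℝ, (∀ i, 0 < δ i) ∧ Tendsto δ cofinite (𝓝 0) := by
  have := Encodable.ofCountable ι
  obtain ⟨δ, hδ, c, hc, -⟩ := posSumOfEncodable one_pos ι
  exact ⟨δ, hδ, hc.summable.tendsto_cofinite_zero⟩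

lemma exists_units_smul_norm_le_one {𝕜 E ι : Type*} [RCLike 𝕜] [NormedAddCommGroup E]
    [NormedSpace 𝕜 E] (D : ι → E) : ∃ s : ι → 𝕜ˣ, ∀ i, ‖s i • D i‖ ≤ 1 := by
  refine ⟨fun i => Units.mk0 (((‖D i‖ + 1)⁻¹ : ℝ) : 𝕜) (RCLike.ofReal_ne_zero.2 (by positivity)),
    fun i => ?_⟩
  rw [Units.smul_def, Units.val_mk0, norm_smul, RCLike.norm_ofReal, abs_of_pos (by positivity),
    inv_mul_le_one₀ (by positivity)]
  linarith

theorem stmt_16_general (n : ℕ)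
    {H : Type*} [NormedAddCommGroup H] [InnerProductSpace ℂ H] [CompleteSpace H]
    (K : Fin n → H →L[ℂ] H) (hcpt : ∀ i, IsCompactOperator ⇑(K i))
    (hq : Tendsto (fun k : ℕ => ‖rowSum K k‖ ^ ((1 : ℝ) / (2 * k))) atTop (nhds 0))
    (Kt : Fin n → lp (fun _ : Word n => H) 2 →L[ℂ] lp (fun _ : Word n => H) 2)
    (hKt : ∀ (i : Fin n) (x : lp (fun _ : Word n => H) 2) (α : Word n),
        (Kt i x : ∀ _ : Word n, H) α = K i ((x : ∀ _ : Word n, H) α)) :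
    ∃ L : Fin n → lp (fun _ : Word n => H) 2 →L[ℂ] lp (fun _ : Word n => H) 2,
      (∀ i, IsCompactOperator ⇑(L i)) ∧
      ∃ X Y : lp (fun _ : Word n => H) 2 →L[ℂ] lp (fun _ : Word n => H) 2,
        Function.Injective X ∧ DenseRange X ∧
        Function.Injective Y ∧ DenseRange Y ∧
        ∀ i : Fin n,
          (adjoint (Kt i)).comp X = X.comp (adjoint (L i)) ∧
          Y.comp (adjoint (Kt i)) = (adjoint (L i)).comp Y := by
  obtain ⟨δ, hδ0, hδ⟩ := exists_pos_tendsto_cofinite_zero (Word n)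
  choose u hu using fun α => exists_unit_norm_conj_le K hq (hδ0 α)
  obtain ⟨s, hs⟩ := exists_units_smul_norm_le_one (𝕜 := ℂ) fun α => star (u α : H →L[ℂ] H)
  obtain ⟨t, ht⟩ := exists_units_smul_norm_le_one (𝕜 := ℂ) fun α => star (↑(u α)⁻¹ : H →L[ℂ] H)
  have hB (i : Fin n) :
      Tendsto (fun α => ‖(u α : H →L[ℂ] H) * K i * ↑(u α)⁻¹‖) cofinite (𝓝 0) :=
    squeeze_zero (fun _ => norm_nonneg _) (hu · i) hδ
  have hbij (c : ℂˣ) (v : (H →L[ℂ] H)ˣ) : Function.Bijective (c • star (v : H →L[ℂ] H)) :=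
    isUnit_iff_bijective.1 (v.isUnit.star.smul c)
  have hKt' (i : Fin n) :
      Kt i = diagOp (fun _ => K i)
        (bddAbove_def.2 ⟨‖K i‖, Set.forall_mem_range.2 fun _ => le_rfl⟩) := by
    ext x α
    exact hKt i x α
  refine ⟨fun i => diagOp _ (hB i).bddAbove_range_of_cofinite,
    fun i => isCompactOperator_diagOp (fun α => ?_) (hB i),
    diagOp _ (bddAbove_def.2 ⟨1, Set.forall_mem_range.2 hs⟩),
    diagOp _ (bddAbove_def.2 ⟨1, Set.forall_mem_range.2 ht⟩),
    diagOp_injective fun _ => (hbij _ _).1,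
    denseRange_diagOp ENNReal.ofNat_ne_top fun _ => (hbij _ _).2,
    diagOp_injective fun _ => (hbij _ _).1,
    denseRange_diagOp ENNReal.ofNat_ne_top fun _ => (hbij _ _).2,
    fun i => ⟨?_, ?_⟩⟩
  · rw [mul_def, mul_def, coe_comp, coe_comp]
    exact ((hcpt i).comp_clm _).clm_comp _
  · rw [hKt', adjoint_diagOp, adjoint_diagOp]
    refine diagOp_comp_diagOp_eq fun α => ?_
    simpa only [← star_eq_adjoint, mul_def] using
      ((Units.mk_semiconjBy (u α) (K i)).star_star_star.smul_left (s α)).eq.symm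
  · rw [hKt', adjoint_diagOp, adjoint_diagOp]
    refine diagOp_comp_diagOp_eq fun α => ?_
    simpa only [← star_eq_adjoint, mul_def] using
      ((Units.mk_semiconjBy (u α) (K i)).units_inv_symm_left.star_star_star.smul_left (t α)).eq

theorem stmt_16 (n : ℕ) (hn : 1 ≤ n)
    {H : Type*} [NormedAddCommGroup H] [InnerProductSpace ℂ H] [CompleteSpace H]
    [TopologicalSpace.SeparableSpace H]
    (K : Fin n → H →L[ℂ] H) (hcpt : ∀ i, IsCompactOperator ⇑(K i))
    (hq : Tendsto (fun k : ℕ => ‖rowSum K k‖ ^ ((1 : ℝ) / (2 * k))) atTop (nhds 0))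
    (Kt : Fin n → lp (fun _ : Word n => H) 2 →L[ℂ] lp (fun _ : Word n => H) 2)
    (hKt : ∀ (i : Fin n) (x : lp (fun _ : Word n => H) 2) (α : Word n),
        (Kt i x : ∀ _ : Word n, H) α = K i ((x : ∀ _ : Word n, H) α)) :
    ∃ L : Fin n → lp (fun _ : Word n => H) 2 →L[ℂ] lp (fun _ : Word n => H) 2,
      (∀ i, IsCompactOperator ⇑(L i)) ∧
      ∃ X Y : lp (fun _ : Word n => H) 2 →L[ℂ] lp (fun _ : Word n => H) 2,
        Function.Injective X ∧ DenseRange X ∧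
        Function.Injective Y ∧ DenseRange Y ∧
        ∀ i : Fin n,
          (adjoint (Kt i)).comp X = X.comp (adjoint (L i)) ∧
          Y.comp (adjoint (Kt i)) = (adjoint (L i)).comp Y :=
  stmt_16_general n K hcpt hq Kt hKt

end
end
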